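/- arXiv:math/9903187 — 2 statements merged into one kernel-verified Lean document; each statement's English description precedes it below -/
import Mathlib

section
/- Let $(R, \|\cdot\|)$ be a complete ring with a non-archimedean norm as above, let $\mathcal{A}$ be a Boolean algebra of subsets of a set $\Omega$ equipped with a finitely additive measure $\mu : \mathcal{A} \to R$ satisfying $\|\mu(A \cup B)\| \le \max(\|\mu(A)\|, \|\mu(B)\|)$ and $\|\mu(A)\| \le \|\mu(B)\|$ whenever $A \subseteq B$. Suppose $(A_i)_{i \in \mathbb{N}}$ are mutually disjoint sets in $\mathcal{A}$ whose union $A$ lies in $\mathcal{A}$, and suppose the compactness property holds: any cover of a set in $\mathcal{A}$ by countably many sets in $\mathcal{A}$ admits a finite subcover. Then $\sum_{i \in \mathbb{N}} \mu(A_i)$ converges in $R$ to $\mu(A)$. -/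
open Filter

/-- σ-additivity of a finitely additive measure, with values in a complete
non-archimedean normed ring, on a Boolean algebra of sets satisfying the norm inequalities
and the countable compactness property: if mutually disjoint sets `A i` of the algebra have
union `A` in the algebra, and `‖μ (A i)‖ → 0`, then `∑ μ (A i)` converges to `μ A`. -/
theorem stmt8 {Ω R : Type*} [NormedRing R] [CompleteSpace R]
    (hna : ∀ a b : R, ‖a + b‖ ≤ max ‖a‖ ‖b‖)
    (𝒜 : Set (Set Ω)) (hempty : ∅ ∈ 𝒜)
    (hcompl : ∀ A ∈ 𝒜, Aᶜ ∈ 𝒜)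
    (hunion : ∀ A ∈ 𝒜, ∀ B ∈ 𝒜, A ∪ B ∈ 𝒜)
    (μ : Set Ω → R)
    (hadd : ∀ A ∈ 𝒜, ∀ B ∈ 𝒜, Disjoint A B → μ (A ∪ B) = μ A + μ B)
    (hmax : ∀ A ∈ 𝒜, ∀ B ∈ 𝒜, ‖μ (A ∪ B)‖ ≤ max ‖μ A‖ ‖μ B‖)
    (hmono : ∀ A ∈ 𝒜, ∀ B ∈ 𝒜, A ⊆ B → ‖μ A‖ ≤ ‖μ B‖)
    (hcompact : ∀ A ∈ 𝒜, ∀ B : ℕ → Set Ω, (∀ i, B i ∈ 𝒜) → A ⊆ ⋃ i, B i →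
      ∃ I : Finset ℕ, A ⊆ ⋃ i ∈ I, B i)
    (A : ℕ → Set Ω) (hA : ∀ i, A i ∈ 𝒜)
    (hdisj : ∀ i j, i ≠ j → Disjoint (A i) (A j))
    (hU : (⋃ i, A i) ∈ 𝒜)
    (htail : Tendsto (fun i => ‖μ (A i)‖) atTop (nhds 0)) :
    Tendsto (fun N => ∑ i ∈ Finset.range N, μ (A i)) atTop (nhds (μ (⋃ i, A i))) := by
  set U := ⋃ i, A i with hUdef
  -- μ ∅ = 0
  have hμ0 : μ (∅ : Set Ω) = 0 := by
    have h := hadd ∅ hempty ∅ hempty (by simp)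
    simp only [Set.union_self] at h
    exact (left_eq_add.mp h)
  -- finite unions are in 𝒜
  have hfin : ∀ (I : Finset ℕ) (B : ℕ → Set Ω), (∀ i, B i ∈ 𝒜) → (⋃ i ∈ I, B i) ∈ 𝒜 := by
    intro I B hB
    induction I using Finset.induction_on with
    | empty => simpa using hempty
    | @insert a s ha ih =>
        rw [Finset.set_biUnion_insert]
        exact hunion _ (hB _) _ ih
  -- norm of finite union bound
  have hfinnorm : ∀ (I : Finset ℕ) (B : ℕ → Set Ω), (∀ i, B i ∈ 𝒜) →
      ∀ ε : ℝ, 0 < ε → (∀ i ∈ I, ‖μ (B i)‖ < ε) → ‖μ (⋃ i ∈ I, B i)‖ < ε := by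
    intro I B hB ε hε
    induction I using Finset.induction_on with
    | empty => intro _; simpa [hμ0] using hε
    | @insert a s ha ih =>
        intro h
        rw [Finset.set_biUnion_insert]
        have h1 := hmax _ (hB a) _ (hfin s B hB)
        have h2 : ‖μ (B a)‖ < ε := h a (Finset.mem_insert_self a s)
        have h3 : ‖μ (⋃ i ∈ s, B i)‖ < ε := ih fun i hi => h i (Finset.mem_insert_of_mem hi)
        exact lt_of_le_of_lt h1 (max_lt h2 h3)
  -- partial unions
  set S : ℕ → Set Ω := fun N => ⋃ i ∈ Finset.range N, A i with hSdef
  have hSmem : ∀ N, S N ∈ 𝒜 := fun N => hfin _ _ hA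
  have hSsum : ∀ N, μ (S N) = ∑ i ∈ Finset.range N, μ (A i) := by
    intro N
    induction N with
    | zero => simpa [hSdef] using hμ0
    | succ n ih =>
        have hdisjSN : Disjoint (S n) (A n) := by
          rw [hSdef, Set.disjoint_iUnion_left]
          intro i
          rw [Set.disjoint_iUnion_left]
          intro hi
          exact hdisj i n (Finset.mem_range.mp hi).ne
        have hun : S (n + 1) = S n ∪ A n := by
          simp only [hSdef, Finset.range_add_one, Finset.set_biUnion_insert, Set.union_comm]
        rw [hun, hadd _ (hSmem n) _ (hA n) hdisjSN, ih, Finset.sum_range_succ]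
  -- remainders
  set T : ℕ → Set Ω := fun N => U ∩ (S N)ᶜ with hTdef
  have hTmem : ∀ N, T N ∈ 𝒜 := by
    intro N
    have : T N = (Uᶜ ∪ S N)ᶜ := by
      rw [hTdef]; ext x; simp [not_or]
    rw [this]
    exact hcompl _ (hunion _ (hcompl _ hU) _ (hSmem N))
  have hsplit : ∀ N, μ U = μ (S N) + μ (T N) := by
    intro N
    have h1 : S N ∪ T N = U := by
      rw [hTdef]
      have hsub : S N ⊆ U := by
        rw [hSdef]
        exact Set.iUnion₂_subset fun i _ => Set.subset_iUnion A i
      ext x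
      constructor
      · rintro (h | ⟨h, _⟩)
        · exact hsub h
        · exact h
      · intro hx
        by_cases hxs : x ∈ S N
        · exact Or.inl hxs
        · exact Or.inr ⟨hx, hxs⟩
    have h2 : Disjoint (S N) (T N) := by
      rw [hTdef]
      exact Set.disjoint_right.mpr fun x hx => fun hs => hx.2 hs
    rw [← h1, hadd _ (hSmem N) _ (hTmem N) h2]
  -- ‖μ (T N)‖ → 0
  have hTnorm : ∀ ε : ℝ, 0 < ε → ∀ᶠ N in atTop, ‖μ (T N)‖ < ε := by
    intro ε hε
    have hev : ∀ᶠ i in atTop, ‖μ (A i)‖ < ε := htail.eventually (gt_mem_nhds hε)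
    obtain ⟨N₀, hN₀⟩ := eventually_atTop.mp hev
    filter_upwards [eventually_ge_atTop N₀] with N hN
    -- T N ⊆ ⋃ i, A (N + i)
    have hcov : T N ⊆ ⋃ i, A (N + i) := by
      rintro x ⟨hxU, hxS⟩
      obtain ⟨j, hj⟩ := Set.mem_iUnion.mp hxU
      have hjN : N ≤ j := by
        by_contra hlt
        push_neg at hlt
        exact hxS (Set.mem_biUnion (Finset.mem_range.mpr hlt) hj)
      exact Set.mem_iUnion.mpr ⟨j - N, by rwa [Nat.add_sub_cancel' hjN]⟩
    obtain ⟨I, hI⟩ := hcompact _ (hTmem N) (fun i => A (N + i)) (fun i => hA _) hcov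
    have h1 : ‖μ (T N)‖ ≤ ‖μ (⋃ i ∈ I, A (N + i))‖ :=
      hmono _ (hTmem N) _ (hfin I _ fun i => hA _) hI
    have h2 : ‖μ (⋃ i ∈ I, A (N + i))‖ < ε :=
      hfinnorm I _ (fun i => hA _) ε hε fun i _ => hN₀ (N + i) (le_trans hN (Nat.le_add_right N i))
    exact lt_of_le_of_lt h1 h2
  have hT0 : Tendsto (fun N => μ (T N)) atTop (nhds 0) := by
    rw [NormedAddCommGroup.tendsto_nhds_zero]
    exact hTnorm
  have heq : ∀ N, ∑ i ∈ Finset.range N, μ (A i) = μ U - μ (T N) := by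
    intro N
    rw [← hSsum N, hsplit N, add_sub_cancel_right]
  simp only [heq]
  have : Tendsto (fun N => μ U - μ (T N)) atTop (nhds (μ U - 0)) :=
    tendsto_const_nhds.sub hT0
  simpa using this
end

section
/- In the setting of the previous statement, suppose additionally that the compactness property of Lemma A.3 holds (any countable cover of a set in $\mathcal{C}$ by sets in $\mathcal{C}$ has a finite subcover). If $A$ is approximable (measurable) with approximating data $A_i(\varepsilon)$, then $\lim_{\varepsilon \to 0} \mu(A_0(\varepsilon))$ exists in $R$ and is independent of the choice of approximating sequences. -/
open Filter

/-- `A` is approximable (measurable) if for every `ε > 0` there are sets `A₀, A₁, A₂, …`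
of the Boolean algebra `𝒞` with `A ∆ A₀ ⊆ ⋃_{i ≥ 1} A i` and `‖μ (A i)‖ ≤ ε` for `i ≥ 1`. -/
def Approximable {Ω R : Type*} [NormedRing R] (𝒞 : Set (Set Ω)) (μ : Set Ω → R)
    (A : Set Ω) : Prop :=
  ∀ ε : ℝ, 0 < ε → ∃ (A0 : Set Ω) (As : ℕ → Set Ω),
    A0 ∈ 𝒞 ∧ (∀ i, As i ∈ 𝒞) ∧ symmDiff A A0 ⊆ ⋃ i, As i ∧ ∀ i, ‖μ (As i)‖ ≤ ε

/-- Existence and well-definedness of the measure of a measurable set: if `A` is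
approximable, then `μ (A₀(ε))` converges as `ε → 0⁺` to a limit independent of the choice
of the approximating data. -/
theorem stmt10 {Ω R : Type*} [NormedRing R] [CompleteSpace R]
    (hna : ∀ a b : R, ‖a + b‖ ≤ max ‖a‖ ‖b‖)
    (𝒞 : Set (Set Ω)) (hempty : ∅ ∈ 𝒞)
    (hcompl : ∀ A ∈ 𝒞, Aᶜ ∈ 𝒞)
    (hunion : ∀ A ∈ 𝒞, ∀ B ∈ 𝒞, A ∪ B ∈ 𝒞)
    (μ : Set Ω → R)
    (hadd : ∀ A ∈ 𝒞, ∀ B ∈ 𝒞, Disjoint A B → μ (A ∪ B) = μ A + μ B)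
    (hmax : ∀ A ∈ 𝒞, ∀ B ∈ 𝒞, ‖μ (A ∪ B)‖ ≤ max ‖μ A‖ ‖μ B‖)
    (hmono : ∀ A ∈ 𝒞, ∀ B ∈ 𝒞, A ⊆ B → ‖μ A‖ ≤ ‖μ B‖)
    (hcompact : ∀ A ∈ 𝒞, ∀ B : ℕ → Set Ω, (∀ i, B i ∈ 𝒞) → A ⊆ ⋃ i, B i →
      ∃ I : Finset ℕ, A ⊆ ⋃ i ∈ I, B i)
    (A : Set Ω) (hA : Approximable 𝒞 μ A) :
    ∃ m : R, ∀ (A0 : ℝ → Set Ω) (As : ℝ → ℕ → Set Ω),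
      (∀ ε : ℝ, 0 < ε → A0 ε ∈ 𝒞 ∧ (∀ i, As ε i ∈ 𝒞) ∧
        symmDiff A (A0 ε) ⊆ ⋃ i, As ε i ∧ ∀ i, ‖μ (As ε i)‖ ≤ ε) →
      Tendsto (fun ε => μ (A0 ε)) (nhdsWithin 0 (Set.Ioi (0 : ℝ))) (nhds m) := by
  classical
  -- basic closure properties
  have hinter : ∀ S ∈ 𝒞, ∀ T ∈ 𝒞, S ∩ T ∈ 𝒞 := by
    intro S hS T hT
    have : S ∩ T = (Sᶜ ∪ Tᶜ)ᶜ := by simp [Set.compl_union]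
    rw [this]
    exact hcompl _ (hunion _ (hcompl _ hS) _ (hcompl _ hT))
  have hdiff : ∀ S ∈ 𝒞, ∀ T ∈ 𝒞, S \ T ∈ 𝒞 := by
    intro S hS T hT
    exact hinter _ hS _ (hcompl _ hT)
  have hμ0 : μ (∅ : Set Ω) = 0 := by
    have h := hadd ∅ hempty ∅ hempty (by simp)
    simp only [Set.union_empty] at h
    exact add_eq_left.mp h.symm
  -- finite unions
  have hfin : ∀ (I : Finset ℕ) (C : ℕ → Set Ω), (∀ i, C i ∈ 𝒞) →
      (⋃ i ∈ I, C i) ∈ 𝒞 ∧ ∀ c : ℝ, 0 ≤ c → (∀ i, ‖μ (C i)‖ ≤ c) →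
        ‖μ (⋃ i ∈ I, C i)‖ ≤ c := by
    intro I C hC
    induction I using Finset.induction with
    | empty =>
      constructor
      · simpa using hempty
      · intro c hc _
        simp [hμ0, hc]
    | @insert a s ha ih =>
      rw [Finset.set_biUnion_insert]
      refine ⟨hunion _ (hC a) _ ih.1, ?_⟩
      intro c hc hb
      refine le_trans (hmax _ (hC a) _ ih.1) ?_
      exact max_le (hb a) (ih.2 c hc hb)
  -- key comparison lemma
  have key : ∀ (A0 B0 : Set Ω) (As Bs : ℕ → Set Ω) (ε δ : ℝ), 0 < ε → 0 < δ →
      A0 ∈ 𝒞 → B0 ∈ 𝒞 → (∀ i, As i ∈ 𝒞) → (∀ i, Bs i ∈ 𝒞) →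
      symmDiff A A0 ⊆ ⋃ i, As i → symmDiff A B0 ⊆ ⋃ i, Bs i →
      (∀ i, ‖μ (As i)‖ ≤ ε) → (∀ i, ‖μ (Bs i)‖ ≤ δ) →
      ‖μ A0 - μ B0‖ ≤ max ε δ := by
    intro A0 B0 As Bs ε δ hε hδ hA0 hB0 hAs hBs hcov1 hcov2 hb1 hb2
    set C : ℕ → Set Ω := fun i => As i ∪ Bs i with hCdef
    have hC : ∀ i, C i ∈ 𝒞 := fun i => hunion _ (hAs i) _ (hBs i)
    have hCb : ∀ i, ‖μ (C i)‖ ≤ max ε δ := by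
      intro i
      refine le_trans (hmax _ (hAs i) _ (hBs i)) ?_
      exact max_le_max (hb1 i) (hb2 i)
    have hsd : symmDiff A0 B0 ⊆ ⋃ i, C i := by
      have h1 : symmDiff A0 B0 ⊆ symmDiff A0 A ∪ symmDiff A B0 := symmDiff_triangle A0 A B0
      intro x hx
      rcases h1 hx with h | h
      · rcases Set.mem_iUnion.mp (hcov1 (symmDiff_comm A0 A ▸ h)) with ⟨i, hi⟩
        exact Set.mem_iUnion.mpr ⟨i, Or.inl hi⟩
      · rcases Set.mem_iUnion.mp (hcov2 h) with ⟨i, hi⟩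
        exact Set.mem_iUnion.mpr ⟨i, Or.inr hi⟩
    -- any set of 𝒞 inside the symm diff has small measure
    have small : ∀ D ∈ 𝒞, D ⊆ symmDiff A0 B0 → ‖μ D‖ ≤ max ε δ := by
      intro D hD hDsub
      obtain ⟨I, hI⟩ := hcompact D hD C hC (hDsub.trans hsd)
      obtain ⟨hImem, hIbound⟩ := hfin I C hC
      refine le_trans (hmono _ hD _ hImem hI) ?_
      exact hIbound _ (le_max_of_le_left hε.le) hCb
    have hd1 : A0 \ B0 ∈ 𝒞 := hdiff _ hA0 _ hB0
    have hd2 : B0 \ A0 ∈ 𝒞 := hdiff _ hB0 _ hA0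
    have hs1 : A0 \ B0 ⊆ symmDiff A0 B0 := by
      intro x hx; exact Or.inl hx
    have hs2 : B0 \ A0 ⊆ symmDiff A0 B0 := by
      intro x hx; exact Or.inr hx
    have hi1 : A0 ∩ B0 ∈ 𝒞 := hinter _ hA0 _ hB0
    have e1 : μ A0 = μ (A0 ∩ B0) + μ (A0 \ B0) := by
      have hdisj : Disjoint (A0 ∩ B0) (A0 \ B0) :=
        Set.disjoint_left.mpr (fun x hx hx' => hx'.2 hx.2)
      have := hadd _ hi1 _ hd1 hdisj
      rwa [Set.inter_union_diff] at this
    have e2 : μ B0 = μ (A0 ∩ B0) + μ (B0 \ A0) := by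
      have hdisj : Disjoint (A0 ∩ B0) (B0 \ A0) :=
        Set.disjoint_left.mpr (fun x hx hx' => hx'.2 hx.1)
      have h := hadd _ hi1 _ hd2 hdisj
      have hu : (A0 ∩ B0) ∪ (B0 \ A0) = B0 := by
        rw [Set.inter_comm]; exact Set.inter_union_diff _ _
      rwa [hu] at h
    have : μ A0 - μ B0 = μ (A0 \ B0) + -(μ (B0 \ A0)) := by
      rw [e1, e2]; abel
    rw [this]
    refine le_trans (hna _ _) ?_
    rw [norm_neg]
    exact max_le (small _ hd1 hs1) (small _ hd2 hs2)
  -- choose a reference sequence at levels 1/(n+1)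
  have hseq : ∀ n : ℕ, ∃ (B0 : Set Ω) (Bs : ℕ → Set Ω),
      B0 ∈ 𝒞 ∧ (∀ i, Bs i ∈ 𝒞) ∧ symmDiff A B0 ⊆ ⋃ i, Bs i ∧
        ∀ i, ‖μ (Bs i)‖ ≤ 1 / (n + 1) := fun n =>
    hA (1 / (n + 1)) (by positivity)
  choose B0 Bs hB0 hBs hBcov hBb using hseq
  -- Cauchyness
  have hcau : CauchySeq (fun n => μ (B0 n)) := by
    rw [Metric.cauchySeq_iff']
    intro δ hδ
    obtain ⟨N, hN⟩ := exists_nat_one_div_lt hδ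
    refine ⟨N, fun n hn => ?_⟩
    rw [dist_eq_norm]
    have hk := key (B0 n) (B0 N) (Bs n) (Bs N) (1 / (n + 1)) (1 / (N + 1))
      (by positivity) (by positivity) (hB0 n) (hB0 N) (hBs n) (hBs N)
      (hBcov n) (hBcov N) (hBb n) (hBb N)
    refine lt_of_le_of_lt (hk.trans ?_) hN
    apply max_le _ le_rfl
    gcongr
  obtain ⟨m, hm⟩ := cauchySeq_tendsto_of_complete hcau
  refine ⟨m, ?_⟩
  intro A0 As hdata
  rw [Metric.tendsto_nhdsWithin_nhds]
  intro δ hδ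
  refine ⟨δ, hδ, fun ε hε _ => ?_⟩
  have hε' : 0 < ε := hε
  obtain ⟨hA0ε, hAsε, hcovε, hbε⟩ := hdata ε hε'
  -- show ‖μ (A0 ε) - m‖ ≤ ε
  have hle : ‖μ (A0 ε) - m‖ ≤ ε := by
    have htend : Tendsto (fun n => ‖μ (A0 ε) - μ (B0 n)‖) atTop (nhds ‖μ (A0 ε) - m‖) :=
      ((tendsto_const_nhds.sub hm).norm)
    refine le_of_tendsto htend ?_
    obtain ⟨N, hN⟩ := exists_nat_one_div_lt hε'
    filter_upwards [eventually_ge_atTop N] with n hn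
    have hk := key (A0 ε) (B0 n) (As ε) (Bs n) ε (1 / (n + 1)) hε' (by positivity)
      hA0ε (hB0 n) hAsε (hBs n) hcovε (hBcov n) hbε (hBb n)
    refine hk.trans ?_
    apply max_le le_rfl
    refine le_trans ?_ hN.le
    gcongr
  rw [dist_eq_norm]
  calc ‖μ (A0 ε) - m‖ ≤ ε := hle
    _ < δ := by simpa [abs_of_pos hε'] using ‹dist ε 0 < δ›
end
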